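/- For every integer d ≥ 2 and every integer j ≥ 0, 𝔹_0(R_{[1^j, d]}) = −R_{[1^{j+1}, d−1]}. -/

import Mathlib

open scoped BigOperators

noncomputable section

/-- `NSym`: the free associative `ℚ`-algebra on noncommuting generators `H_1, H_2, …`. -/
abbrev NSym : Type := FreeAlgebra ℚ ℕ+

/-- `H n` for an integer `n`: the generator `H_n` for `n > 0`, with `H_0 = 1` and `H_n = 0`
for `n < 0`. -/
noncomputable def H (n : ℤ) : NSym :=
  if h : 0 < n then FreeAlgebra.ι ℚ (⟨n.toNat, by omega⟩ : ℕ+)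
  else if n = 0 then 1 else 0

/-- A composition: a list of positive integers. -/
def IsComp (α : List ℕ) : Prop := ∀ x ∈ α, 0 < x

/-- The immaculate function of an integer sequence `α`. -/
noncomputable def Imm (α : List ℤ) : NSym :=
  ∑ σ : Equiv.Perm (Fin α.length),
    (Equiv.Perm.sign σ : ℤ) •
      (List.ofFn fun i : Fin α.length =>
        H (α.get i + ((σ i : ℕ) : ℤ) - ((i : ℕ) : ℤ))).prod

/-- The set `D(α)` of proper partial sums of a composition. -/
def Dset (α : List ℕ) : Set ℕ := {n | ∃ i, 0 < i ∧ i < α.length ∧ (α.take i).sum = n}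

/-- The ribbon function `R_α`. -/
noncomputable def Ribbon (α : List ℕ) : NSym :=
  ∑ᶠ (β : List ℕ) (_ : IsComp β ∧ β.sum = α.sum ∧ Dset β ⊆ Dset α),
    (-1 : ℤ) ^ (α.length - β.length) • (β.map fun n => H (n : ℤ)).prod

/-- The noncommutative power sum `Ψ_k`. -/
noncomputable def Psi (k : ℕ) : NSym :=
  ∑ i ∈ Finset.range k, (-1 : ℤ) ^ i • Ribbon (List.replicate i 1 ++ [k - i])

/-- `(i,j)` (0-indexed) is a cell of the skew diagram `γ/α`. -/
def Cell (α γ : List ℕ) (i j : ℕ) : Prop :=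
  i < γ.length ∧ α.getD i 0 ≤ j ∧ j < γ.getD i 0

/-- An immaculate tableau of shape `γ/α`, encoded as a function which is zero off the
cells of `γ/α`, positive on the cells, weakly increasing along rows and strictly
increasing down the first column. -/
def IsImmTab (α γ : List ℕ) (f : ℕ → ℕ → ℕ) : Prop :=
  (∀ i j, Cell α γ i j → 0 < f i j) ∧
  (∀ i j, ¬ Cell α γ i j → f i j = 0) ∧
  (∀ i j j', Cell α γ i j → Cell α γ i j' → j ≤ j' → f i j ≤ f i j') ∧
  (∀ i i', i < i' → Cell α γ i 0 → Cell α γ i' 0 → f i 0 < f i' 0)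

/-- The number of cells of the filling `f` (of outer shape `γ`) containing the letter `k ≥ 1`. -/
def content (γ : List ℕ) (f : ℕ → ℕ → ℕ) (k : ℕ) : ℕ :=
  ((Finset.range γ.length ×ˢ Finset.range γ.sum).filter fun p => f p.1 p.2 = k).card

/-- The reading word of a filling of shape `γ/α`: each row right to left, top to bottom. -/
def readWord (α γ : List ℕ) (f : ℕ → ℕ → ℕ) : List ℕ :=
  (List.range γ.length).flatMap fun i =>
    ((List.range' (α.getD i 0) (γ.getD i 0 - α.getD i 0)).reverse).map (f i)

/-- A word is Yamanouchi if every prefix has at least as many `j`'s as `j+1`'s, for all `j ≥ 1`. -/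
def Yamanouchi (w : List ℕ) : Prop :=
  ∀ j k : ℕ, 0 < j → (w.take k).count (j + 1) ≤ (w.take k).count j

/-- `α ⊆ γ` componentwise. -/
def Contains (α γ : List ℕ) : Prop :=
  α.length ≤ γ.length ∧ ∀ i < α.length, α.getD i 0 ≤ γ.getD i 0

/-- The immaculate Littlewood–Richardson coefficient `C_{α,λ}^β`: the number of Yamanouchi
immaculate tableaux of shape `β/α` and content `λ`. -/
noncomputable def Ccoef (α lam β : List ℕ) : ℕ :=
  Nat.card {f : ℕ → ℕ → ℕ //
    IsImmTab α β f ∧ (∀ k : ℕ, content β f (k + 1) = lam.getD k 0) ∧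
    Yamanouchi (readWord α β f)}

/-- The axioms determining the operators `M_β^⊥` on `NSym`. -/
def MperpAxioms (Mp : List ℕ → NSym →ₗ[ℚ] NSym) : Prop :=
  Mp [] = LinearMap.id ∧
  (∀ β : List ℕ, IsComp β → β ≠ [] → Mp β 1 = 0) ∧
  (∀ b : ℕ, ∀ rest : List ℕ, 0 < b → IsComp rest → ∀ n : ℕ, 1 ≤ n → ∀ x : NSym,
    Mp (b :: rest) (H (n : ℤ) * x)
      = H ((n : ℤ) - (b : ℤ)) * Mp rest x + H (n : ℤ) * Mp (b :: rest) x)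

/-- The creation operator `𝔹_m`. -/
noncomputable def Bop (Mp : List ℕ → NSym →ₗ[ℚ] NSym) (m : ℤ) (x : NSym) : NSym :=
  ∑ᶠ i : ℕ, (-1 : ℤ) ^ i • (H (m + (i : ℤ)) * Mp (List.replicate i 1) x)


/-! ### Auxiliary machinery -/

lemma H_zero' : H 0 = 1 := by simp [H]
lemma H_neg' {n : ℤ} (h : n < 0) : H n = 0 := by
  simp only [H]; rw [dif_neg (by omega), if_neg (by omega)]

noncomputable def Lam (k : ℕ) : NSym :=
  ∑ c : Composition k, (-1 : ℤ) ^ (k - c.length) • ((c.blocks.map fun n => H (n:ℤ)).prod)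

noncomputable def LamZ (m : ℤ) : NSym := if 0 ≤ m then Lam m.toNat else 0

lemma LamZ_ofNat (k : ℕ) : LamZ (k : ℤ) = Lam k := by simp [LamZ]
lemma LamZ_neg {m : ℤ} (h : m < 0) : LamZ m = 0 := by simp [LamZ, not_le.mpr h]

lemma comp_zero_blocks (c : Composition 0) : c.blocks = [] := by
  cases hb : c.blocks with
  | nil => rfl
  | cons a l =>
    have h1 : 0 < a := c.blocks_pos (by rw [hb]; exact List.mem_cons_self)
    have h2 : c.blocks.sum = 0 := c.blocks_sum
    rw [hb] at h2; simp at h2; omega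

lemma Lam_zero : Lam 0 = 1 := by
  have hu : (Finset.univ : Finset (Composition 0)) = {⟨[], by simp, by simp⟩} := by
    apply Finset.eq_singleton_iff_unique_mem.mpr
    refine ⟨Finset.mem_univ _, fun c _ => ?_⟩
    exact Composition.ext (comp_zero_blocks c)
  rw [Lam, hu, Finset.sum_singleton]
  simp [Composition.length]

lemma comp_blocks_ne_nil {k : ℕ} (c : Composition (k+1)) : c.blocks ≠ [] := by
  intro h
  have := c.blocks_sum
  rw [h] at this; simp at this

lemma list_length_le_sum {l : List ℕ} (h : ∀ x ∈ l, 0 < x) : l.length ≤ l.sum := by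
  induction l with
  | nil => simp
  | cons x t ih =>
    simp only [List.length_cons, List.sum_cons]
    have := h x (List.mem_cons_self)
    have := ih (fun y hy => h y (List.mem_cons_of_mem x hy))
    omega
lemma Lam_succ (k : ℕ) : Lam (k+1) =
    ∑ a ∈ Finset.Icc 1 (k+1), (-1:ℤ)^(a-1) • (H (a:ℤ) * Lam (k+1-a)) := by
  have hmaps : ∀ c : Composition (k+1), c ∈ (Finset.univ : Finset (Composition (k+1))) →
      c.blocks.headI ∈ Finset.Icc 1 (k+1) := by
    intro c _
    have hne := comp_blocks_ne_nil c
    have hsum := c.blocks_sum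
    obtain ⟨x, l, hb⟩ := List.exists_cons_of_ne_nil hne
    have hpos : 0 < x := c.blocks_pos (by rw [hb]; exact List.mem_cons_self)
    rw [hb] at hsum; simp only [List.sum_cons] at hsum
    rw [hb]; simp only [List.headI_cons]
    rw [Finset.mem_Icc]; omega
  rw [Lam, ← Finset.sum_fiberwise_of_maps_to hmaps]
  apply Finset.sum_congr rfl
  intro a ha
  rw [Finset.mem_Icc] at ha
  have htailsum : ∀ c : Composition (k+1), c.blocks.headI = a → c.blocks.tail.sum = k+1-a := by
    intro c hc
    have hsum := c.blocks_sum
    obtain ⟨x, l, hb⟩ := List.exists_cons_of_ne_nil (comp_blocks_ne_nil c)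
    rw [hb] at hsum hc ⊢
    simp only [List.sum_cons] at hsum
    simp only [List.headI_cons] at hc
    simp only [List.tail_cons]
    omega
  rw [Lam, Finset.mul_sum, Finset.smul_sum]
  apply Finset.sum_nbij' (i := fun c => if hc : c.blocks.headI = a then (⟨c.blocks.tail,
      fun hi => c.blocks_pos (List.mem_of_mem_tail hi), htailsum c hc⟩ : Composition (k+1-a))
      else Classical.arbitrary _)
    (j := fun c' => (⟨a :: c'.blocks,
      fun hi => by
        rcases List.mem_cons.mp hi with h | h
        · omega
        · exact c'.blocks_pos h, by simp [c'.blocks_sum]; omega⟩ : Composition (k+1)))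
  · intro c hc; exact Finset.mem_univ _
  · intro c' hc'
    simp only [Finset.coe_filter, Set.mem_setOf_eq, Finset.mem_filter, Finset.mem_univ, true_and, List.headI]
    exact Finset.mem_filter.mpr ⟨Finset.mem_univ _, rfl⟩
  · intro c hc
    simp only [Finset.mem_filter, Finset.mem_univ, true_and] at hc
    rw [dif_pos hc]
    apply Composition.ext
    simp only
    rw [← hc]
    exact List.cons_head!_tail (comp_blocks_ne_nil c)
  · intro c' hc'
    split
    · apply Composition.ext; simp
    · next h => exact absurd rfl h
  · intro c hc
    simp only [Finset.mem_filter, Finset.mem_univ, true_and] at hc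
    rw [dif_pos hc]
    have hlen : c.length = (c.blocks.tail.length) + 1 := by
      unfold Composition.length
      cases hb : c.blocks with
      | nil => exact absurd hb (comp_blocks_ne_nil c)
      | cons x l => simp
    have hblocks : c.blocks = a :: c.blocks.tail := by
      rw [← hc]; exact (List.cons_head!_tail (comp_blocks_ne_nil c)).symm
    rw [mul_smul_comm, smul_smul]
    conv_lhs => rw [hblocks]
    simp only [List.map_cons, List.prod_cons]
    have hlen2 : c.blocks.tail.length ≤ k+1-a :=
      htailsum c hc ▸ list_length_le_sum (fun x hx => c.blocks_pos (List.mem_of_mem_tail hx))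
    congr 1
    rw [← pow_add]
    congr 1
    simp only [Composition.length, hlen]
    omega

section MpLemmas

variable {Mp : List ℕ → NSym →ₗ[ℚ] NSym}

lemma Mp_nil (hMp : MperpAxioms Mp) (x : NSym) : Mp [] x = x := by
  rw [hMp.1]; rfl

lemma Mp_one_eq_zero (hMp : MperpAxioms Mp) (i : ℕ) :
    Mp (List.replicate (i+1) 1) 1 = 0 := by
  apply hMp.2.1
  · intro x hx
    rw [List.eq_of_mem_replicate hx]; norm_num
  · simp

lemma Mp_rec (hMp : MperpAxioms Mp) (i n : ℕ) (hn : 1 ≤ n) (x : NSym) :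
    Mp (List.replicate (i+1) 1) (H (n:ℤ) * x)
      = H ((n:ℤ) - 1) * Mp (List.replicate i 1) x
        + H (n:ℤ) * Mp (List.replicate (i+1) 1) x := by
  have h := hMp.2.2 1 (List.replicate i 1) one_pos
    (fun x hx => by rw [List.eq_of_mem_replicate hx]; norm_num) n hn x
  rw [List.replicate_succ]
  simpa using h

lemma sum_Icc_one (n : ℕ) (f : ℕ → NSym) :
    ∑ a ∈ Finset.Icc 1 (n+1), f a = ∑ t ∈ Finset.range (n+1), f (t+1) := by
  rw [show Finset.Icc 1 (n+1) = (Finset.range (n+1)).image (·+1) from by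
    ext a
    simp only [Finset.mem_Icc, Finset.mem_image, Finset.mem_range]
    constructor
    · rintro ⟨h1, h2⟩; exact ⟨a-1, by omega, by omega⟩
    · rintro ⟨b, hb, rfl⟩; omega]
  rw [Finset.sum_image (by intro a _ b _ h; simp only at h; omega)]

/-- The master telescoping identity. -/
lemma Wlem (k : ℕ) (r : ℤ) (hr : r ≤ k) :
    ∑ a ∈ Finset.Icc 1 (k+1),
      (-1:ℤ)^(a-1) • (H ((a:ℤ)-1) * LamZ (r+1-(a:ℤ)) + H (a:ℤ) * LamZ (r-(a:ℤ)))
      = LamZ r := by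
  simp only [smul_add]
  rw [Finset.sum_add_distrib, sum_Icc_one, sum_Icc_one]
  have h1 : (∑ t ∈ Finset.range (k+1),
      (-1:ℤ)^(t+1-1) • (H (((t+1:ℕ):ℤ)-1) * LamZ (r+1-((t+1:ℕ):ℤ))))
      = ∑ t ∈ Finset.range (k+1), (-1:ℤ)^t • (H (t:ℤ) * LamZ (r-(t:ℤ))) := by
    apply Finset.sum_congr rfl
    intro t _
    have e1 : t + 1 - 1 = t := by omega
    have e2 : ((t+1:ℕ):ℤ) - 1 = (t:ℤ) := by push_cast; ring
    have e3 : r + 1 - ((t+1:ℕ):ℤ) = r - (t:ℤ) := by push_cast; ring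
    rw [e1, e2, e3]
  have h2 : (∑ t ∈ Finset.range (k+1),
      (-1:ℤ)^(t+1-1) • (H ((t+1:ℕ):ℤ) * LamZ (r-((t+1:ℕ):ℤ))))
      = - ∑ t ∈ Finset.range (k+1), (-1:ℤ)^(t+1) • (H ((t+1:ℕ):ℤ) * LamZ (r-((t+1:ℕ):ℤ))) := by
    rw [← Finset.sum_neg_distrib]
    apply Finset.sum_congr rfl
    intro t _
    have e1 : t + 1 - 1 = t := by omega
    rw [e1, ← neg_smul]
    congr 1
    rw [pow_succ]; ring
  rw [h1, h2]
  have h3 : (∑ t ∈ Finset.range (k+1), (-1:ℤ)^(t+1) • (H ((t+1:ℕ):ℤ) * LamZ (r-((t+1:ℕ):ℤ))))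
      = (∑ t ∈ Finset.range (k+2), (-1:ℤ)^t • (H (t:ℤ) * LamZ (r-(t:ℤ))))
        - (-1:ℤ)^(0:ℕ) • (H ((0:ℕ):ℤ) * LamZ (r-((0:ℕ):ℤ))) := by
    rw [eq_sub_iff_add_eq]
    exact (Finset.sum_range_succ'
      (fun t => (-1:ℤ)^t • (H (t:ℤ) * LamZ (r-(t:ℤ)))) (k+1)).symm
  rw [h3]
  have h4 : (∑ t ∈ Finset.range (k+2), (-1:ℤ)^t • (H (t:ℤ) * LamZ (r-(t:ℤ))))
      = ∑ t ∈ Finset.range (k+1), (-1:ℤ)^t • (H (t:ℤ) * LamZ (r-(t:ℤ))) := by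
    rw [Finset.sum_range_succ]
    have : LamZ (r - ((k+1:ℕ):ℤ)) = 0 := LamZ_neg (by push_cast; omega)
    rw [this]; simp
  rw [h4]
  simp [H_zero']

lemma Mp_Lam_H (hMp : MperpAxioms Mp) :
    ∀ k i N : ℕ, 1 ≤ N →
    Mp (List.replicate (i+1) 1) (Lam k * H (N:ℤ))
      = LamZ ((k:ℤ) - (i:ℤ) - 1) * H (N:ℤ) + LamZ ((k:ℤ) - (i:ℤ)) * H ((N:ℤ)-1) := by
  intro k
  induction k using Nat.strong_induction_on with
  | _ k IH =>
  match k with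
  | 0 =>
    intro i N hN
    rw [Lam_zero, one_mul, ← mul_one (H (N:ℤ)), Mp_rec hMp i N hN 1]
    match i with
    | 0 =>
      rw [List.replicate_zero, Mp_nil hMp, Mp_one_eq_zero hMp 0]
      have e1 : LamZ (((0:ℕ):ℤ) - ((0:ℕ):ℤ) - 1) = 0 := LamZ_neg (by norm_num)
      have e2 : LamZ (((0:ℕ):ℤ) - ((0:ℕ):ℤ)) = 1 := by
        rw [show ((0:ℕ):ℤ) - ((0:ℕ):ℤ) = ((0:ℕ):ℤ) by ring, LamZ_ofNat, Lam_zero]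
      rw [e1, e2]
      simp
    | m+1 =>
      rw [Mp_one_eq_zero hMp m, Mp_one_eq_zero hMp (m+1)]
      have e1 : LamZ (((0:ℕ):ℤ) - ((m+1:ℕ):ℤ) - 1) = 0 := LamZ_neg (by push_cast; omega)
      have e2 : LamZ (((0:ℕ):ℤ) - ((m+1:ℕ):ℤ)) = 0 := LamZ_neg (by push_cast; omega)
      rw [e1, e2]
      simp
  | k'+1 =>
    intro i N hN
    rw [Lam_succ k', Finset.sum_mul]
    simp only [smul_mul_assoc, mul_assoc]
    rw [map_sum]
    simp only [map_zsmul]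
    match i with
    | 0 =>
      have key : ∀ a ∈ Finset.Icc 1 (k'+1),
          (-1:ℤ)^(a-1) • (Mp (List.replicate 1 1) (H (a:ℤ) * (Lam (k'+1-a) * H (N:ℤ))))
          = ((-1:ℤ)^(a-1) • (H ((a:ℤ)-1) * LamZ ((k':ℤ)+1-(a:ℤ)) + H (a:ℤ) * LamZ ((k':ℤ)-(a:ℤ)))) * H (N:ℤ)
            + ((-1:ℤ)^(a-1) • (H (a:ℤ) * LamZ (((k'+1-a:ℕ):ℤ)))) * H ((N:ℤ)-1) := by
        intro a ha
        rw [Finset.mem_Icc] at ha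
        rw [Mp_rec hMp 0 a ha.1, List.replicate_zero, Mp_nil hMp,
          IH (k'+1-a) (by omega) 0 N hN]
        have c1 : ((k'+1-a:ℕ):ℤ) - ((0:ℕ):ℤ) - 1 = (k':ℤ) - (a:ℤ) := by push_cast [ha.2]; ring
        have c2 : ((k'+1-a:ℕ):ℤ) - ((0:ℕ):ℤ) = ((k'+1-a:ℕ):ℤ) := by ring
        have c3 : (Lam (k'+1-a) : NSym) = LamZ ((k':ℤ)+1-(a:ℤ)) := by
          rw [show (k':ℤ)+1-(a:ℤ) = ((k'+1-a:ℕ):ℤ) by push_cast [ha.2]; ring, LamZ_ofNat]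
        rw [c1, c2, c3]
        simp only [smul_mul_assoc, add_mul, mul_add, mul_assoc, smul_add]
        abel
      rw [Finset.sum_congr rfl key, Finset.sum_add_distrib, ← Finset.sum_mul, ← Finset.sum_mul]
      rw [Wlem k' (k':ℤ) le_rfl]
      have c4 : (∑ a ∈ Finset.Icc 1 (k'+1), (-1:ℤ)^(a-1) • (H (a:ℤ) * LamZ (((k'+1-a:ℕ):ℤ))))
          = Lam (k'+1) := by
        rw [Lam_succ k']
        apply Finset.sum_congr rfl
        intro a _
        rw [LamZ_ofNat]
      rw [c4]
      have c5 : LamZ ((((k'+1:ℕ)):ℤ) - ((0:ℕ):ℤ) - 1) = LamZ (k':ℤ) := by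
        congr 1; push_cast; ring
      have c6 : LamZ ((((k'+1:ℕ)):ℤ) - ((0:ℕ):ℤ)) = Lam (k'+1) := by
        rw [show (((k'+1:ℕ)):ℤ) - ((0:ℕ):ℤ) = ((k'+1:ℕ):ℤ) by ring, LamZ_ofNat]
      rw [c5, c6]
    | m+1 =>
      have key : ∀ a ∈ Finset.Icc 1 (k'+1),
          (-1:ℤ)^(a-1) • (Mp (List.replicate (m+2) 1) (H (a:ℤ) * (Lam (k'+1-a) * H (N:ℤ))))
          = ((-1:ℤ)^(a-1) • (H ((a:ℤ)-1) * LamZ (((k':ℤ)-(m:ℤ)-1)+1-(a:ℤ)) + H (a:ℤ) * LamZ (((k':ℤ)-(m:ℤ)-1)-(a:ℤ)))) * H (N:ℤ)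
            + ((-1:ℤ)^(a-1) • (H ((a:ℤ)-1) * LamZ (((k':ℤ)-(m:ℤ))+1-(a:ℤ)) + H (a:ℤ) * LamZ (((k':ℤ)-(m:ℤ))-(a:ℤ)))) * H ((N:ℤ)-1) := by
        intro a ha
        rw [Finset.mem_Icc] at ha
        rw [Mp_rec hMp (m+1) a ha.1,
          IH (k'+1-a) (by omega) m N hN, IH (k'+1-a) (by omega) (m+1) N hN]
        have c1 : ((k'+1-a:ℕ):ℤ) - ((m:ℕ):ℤ) - 1 = ((k':ℤ)-(m:ℤ)-1)+1-(a:ℤ) := by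
          push_cast [ha.2]; ring
        have c2 : ((k'+1-a:ℕ):ℤ) - ((m:ℕ):ℤ) = ((k':ℤ)-(m:ℤ))+1-(a:ℤ) := by
          push_cast [ha.2]; ring
        have c3 : ((k'+1-a:ℕ):ℤ) - ((m+1:ℕ):ℤ) - 1 = ((k':ℤ)-(m:ℤ)-1)-(a:ℤ) := by
          push_cast [ha.2]; ring
        have c4 : ((k'+1-a:ℕ):ℤ) - ((m+1:ℕ):ℤ) = ((k':ℤ)-(m:ℤ))-(a:ℤ) := by
          push_cast [ha.2]; ring
        rw [c1, c2, c3, c4]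
        simp only [smul_mul_assoc, add_mul, mul_add, mul_assoc, smul_add]
        abel
      rw [Finset.sum_congr rfl key, Finset.sum_add_distrib, ← Finset.sum_mul, ← Finset.sum_mul]
      rw [Wlem k' ((k':ℤ)-(m:ℤ)-1) (by omega), Wlem k' ((k':ℤ)-(m:ℤ)) (by omega)]
      have c5 : LamZ ((((k'+1:ℕ)):ℤ) - ((m+1:ℕ):ℤ) - 1) = LamZ ((k':ℤ)-(m:ℤ)-1) := by
        congr 1; push_cast; ring
      have c6 : LamZ ((((k'+1:ℕ)):ℤ) - ((m+1:ℕ):ℤ)) = LamZ ((k':ℤ)-(m:ℤ)) := by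
        congr 1; push_cast; ring
      rw [c5, c6]

end MpLemmas

lemma HLnat (s : ℕ) :
    ∑ i ∈ Finset.range (s+1), (-1:ℤ)^i • (H (i:ℤ) * Lam (s-i))
      = if s = 0 then 1 else 0 := by
  match s with
  | 0 => simp [H_zero', Lam_zero]
  | s''+1 =>
    rw [if_neg (by omega)]
    rw [Finset.sum_range_succ' (fun i => (-1:ℤ)^i • (H (i:ℤ) * Lam (s''+1-i))) (s''+1)]
    have h1 : (∑ i ∈ Finset.range (s''+1), (-1:ℤ)^(i+1) • (H ((i+1:ℕ):ℤ) * Lam (s''+1-(i+1))))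
        = - Lam (s''+1) := by
      rw [Lam_succ s'', sum_Icc_one, ← Finset.sum_neg_distrib]
      apply Finset.sum_congr rfl
      intro t _
      have e1 : t + 1 - 1 = t := by omega
      rw [e1, ← neg_smul, pow_succ]
      congr 1
      ring
    rw [h1]
    simp [H_zero', Lam_zero]

lemma HLZ (s M : ℕ) (hs : s ≤ M + 1) :
    ∑ i ∈ Finset.range (M+2), (-1:ℤ)^i • (H (i:ℤ) * LamZ ((s:ℤ)-(i:ℤ)))
      = if s = 0 then 1 else 0 := by
  rw [← Finset.sum_subset (Finset.range_subset_range.mpr (show s+1 ≤ M+2 by omega))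
    (fun i _ hi => by
      rw [Finset.mem_range, not_lt] at hi
      rw [LamZ_neg (by rw [Finset.mem_range] at *; push_cast; omega)]
      simp)]
  rw [← HLnat s]
  apply Finset.sum_congr rfl
  intro i hi
  rw [Finset.mem_range] at hi
  congr 1
  rw [show (s:ℤ)-(i:ℤ) = ((s-i:ℕ):ℤ) by push_cast [Nat.cast_sub (by omega : i ≤ s)]; ring,
    LamZ_ofNat]

lemma keyS (s M : ℕ) (hs : s ≤ M) (X Y : NSym) :
    Lam s * X + ∑ i ∈ Finset.range (M+1),
      (-1:ℤ)^(i+1) • (H ((i+1:ℕ):ℤ) * (LamZ ((s:ℤ)-(i:ℤ)-1) * X + LamZ ((s:ℤ)-(i:ℤ)) * Y))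
    = (if s = 0 then X else 0) - Lam (s+1) * Y := by
  have expand : ∀ i ∈ Finset.range (M+1),
      (-1:ℤ)^(i+1) • (H ((i+1:ℕ):ℤ) * (LamZ ((s:ℤ)-(i:ℤ)-1) * X + LamZ ((s:ℤ)-(i:ℤ)) * Y))
      = ((-1:ℤ)^(i+1) • (H ((i+1:ℕ):ℤ) * LamZ ((s:ℤ)-((i+1:ℕ):ℤ)))) * X
        + ((-1:ℤ)^(i+1) • (H ((i+1:ℕ):ℤ) * LamZ (((s+1:ℕ):ℤ)-((i+1:ℕ):ℤ)))) * Y := by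
    intro i _
    have e1 : (s:ℤ)-(i:ℤ)-1 = (s:ℤ)-((i+1:ℕ):ℤ) := by push_cast; ring
    have e2 : (s:ℤ)-(i:ℤ) = ((s+1:ℕ):ℤ)-((i+1:ℕ):ℤ) := by push_cast; ring
    rw [e1, e2]
    simp only [smul_mul_assoc, mul_add, mul_assoc, smul_add]
  rw [Finset.sum_congr rfl expand, Finset.sum_add_distrib, ← Finset.sum_mul, ← Finset.sum_mul]
  have hX : Lam s * X + (∑ i ∈ Finset.range (M+1),
      (-1:ℤ)^(i+1) • (H ((i+1:ℕ):ℤ) * LamZ ((s:ℤ)-((i+1:ℕ):ℤ)))) * X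
      = (if s = 0 then X else 0) := by
    rw [← one_smul ℤ (Lam s * X)]
    have e0 : (1:ℤ) • (Lam s * X) = ((-1:ℤ)^(0:ℕ) • (H ((0:ℕ):ℤ) * LamZ ((s:ℤ)-((0:ℕ):ℤ)))) * X := by
      rw [show (s:ℤ)-((0:ℕ):ℤ) = ((s:ℕ):ℤ) by push_cast; ring, LamZ_ofNat]
      simp [H_zero', smul_mul_assoc]
    rw [e0, ← add_mul, add_comm]
    rw [← Finset.sum_range_succ' (fun i => (-1:ℤ)^i • (H (i:ℤ) * LamZ ((s:ℤ)-(i:ℤ)))) (M+1)]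
    rw [HLZ s M (by omega)]
    split <;> simp
  have hY : (∑ i ∈ Finset.range (M+1),
      (-1:ℤ)^(i+1) • (H ((i+1:ℕ):ℤ) * LamZ (((s+1:ℕ):ℤ)-((i+1:ℕ):ℤ)))) * Y
      = - (Lam (s+1) * Y) := by
    have h2 : (∑ i ∈ Finset.range (M+1),
        (-1:ℤ)^(i+1) • (H ((i+1:ℕ):ℤ) * LamZ (((s+1:ℕ):ℤ)-((i+1:ℕ):ℤ))))
        = (∑ i ∈ Finset.range (M+2), (-1:ℤ)^i • (H (i:ℤ) * LamZ (((s+1:ℕ):ℤ)-(i:ℤ))))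
          - (-1:ℤ)^(0:ℕ) • (H ((0:ℕ):ℤ) * LamZ (((s+1:ℕ):ℤ)-((0:ℕ):ℤ))) := by
      rw [eq_sub_iff_add_eq]
      exact (Finset.sum_range_succ'
        (fun i => (-1:ℤ)^i • (H (i:ℤ) * LamZ (((s+1:ℕ):ℤ)-(i:ℤ)))) (M+1)).symm
    rw [h2, HLZ (s+1) M (by omega), if_neg (by omega)]
    rw [show ((s+1:ℕ):ℤ)-((0:ℕ):ℤ) = ((s+1:ℕ):ℤ) by push_cast; ring, LamZ_ofNat]
    simp [H_zero']
  calc Lam s * X + ((∑ i ∈ Finset.range (M+1),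
        (-1:ℤ)^(i+1) • (H ((i+1:ℕ):ℤ) * LamZ ((s:ℤ)-((i+1:ℕ):ℤ)))) * X
      + (∑ i ∈ Finset.range (M+1),
        (-1:ℤ)^(i+1) • (H ((i+1:ℕ):ℤ) * LamZ (((s+1:ℕ):ℤ)-((i+1:ℕ):ℤ)))) * Y)
      = (Lam s * X + (∑ i ∈ Finset.range (M+1),
        (-1:ℤ)^(i+1) • (H ((i+1:ℕ):ℤ) * LamZ ((s:ℤ)-((i+1:ℕ):ℤ)))) * X)
      + (∑ i ∈ Finset.range (M+1),
        (-1:ℤ)^(i+1) • (H ((i+1:ℕ):ℤ) * LamZ (((s+1:ℕ):ℤ)-((i+1:ℕ):ℤ)))) * Y := by ring_nf; abel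
    _ = (if s = 0 then X else 0) - Lam (s+1) * Y := by rw [hX, hY]; abel

section RibbonFormula

lemma sum_take_hook {j n i : ℕ} (hi : i ≤ j) :
    ((List.replicate j 1 ++ [n]).take i).sum = i := by
  rw [List.take_append, List.take_replicate]
  have h1 : min i j = i := by omega
  have h2 : i - (List.replicate j 1).length = 0 := by
    rw [List.length_replicate]; omega
  rw [h1, h2]
  simp [List.sum_replicate]

lemma Dset_hook (j n : ℕ) :
    Dset (List.replicate j 1 ++ [n]) = {m | 1 ≤ m ∧ m ≤ j} := by
  have hlen : (List.replicate j 1 ++ [n]).length = j + 1 := by simp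
  ext m
  constructor
  · rintro ⟨i, h0, h1, rfl⟩
    rw [hlen] at h1
    rw [sum_take_hook (by omega)]
    exact ⟨by omega, by omega⟩
  · rintro ⟨h1, h2⟩
    exact ⟨m, by omega, by omega, sum_take_hook (by omega)⟩

lemma take_pos_sum {l : List ℕ} (h : ∀ x ∈ l, 0 < x) {i : ℕ} (hi : i ≤ l.length) :
    i ≤ (l.take i).sum ∧ (l.take i).sum ≤ l.sum := by
  constructor
  · have hlen : (l.take i).length = i := by
      rw [List.length_take]; omega
    calc i = (l.take i).length := hlen.symm
      _ ≤ (l.take i).sum := list_length_le_sum (fun x hx => h x (List.take_subset i l hx))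
  · have := congrArg List.sum (List.take_append_drop i l)
    rw [List.sum_append] at this
    omega

lemma RibForm (j n : ℕ) (hn : 1 ≤ n) :
    Ribbon (List.replicate j 1 ++ [n])
      = ∑ s ∈ Finset.range (j+1), (-1:ℤ)^(j-s) • (Lam s * H ((n+j-s:ℕ):ℤ)) := by
  classical
  set α := List.replicate j 1 ++ [n] with hα
  have hαlen : α.length = j + 1 := by simp [hα]
  have hαsum : α.sum = j + n := by simp [hα, List.sum_replicate]
  set g : List ℕ → NSym :=
    fun β => (-1 : ℤ) ^ (α.length - β.length) • (β.map fun m => H (m : ℤ)).prod with hg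
  set f : (Σ s : Fin (j+1), Composition s.1) → List ℕ :=
    fun p => p.2.blocks ++ [n + j - p.1.1] with hf
  set T : Finset (List ℕ) := Finset.image f Finset.univ with hT
  have hset : {β | IsComp β ∧ β.sum = α.sum ∧ Dset β ⊆ Dset α} = ↑T := by
    ext β
    simp only [Set.mem_setOf_eq, Finset.coe_image, Set.mem_image, Finset.mem_coe,
      Finset.coe_univ, Set.mem_univ, true_and, hT, Finset.mem_image, Finset.mem_univ]
    constructor
    · rintro ⟨hc, hsum, hd⟩
      rw [hαsum] at hsum
      have hne : β ≠ [] := by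
        intro hemp; rw [hemp] at hsum; simp at hsum; omega
      have hβ : β = β.dropLast ++ [β.getLast hne] := (List.dropLast_append_getLast hne).symm
      have hsum2 : β.dropLast.sum + β.getLast hne = j + n := by
        conv_lhs at hsum => rw [hβ]
        rw [List.sum_append] at hsum
        simpa using hsum
      have hlen2 : β.length = β.dropLast.length + 1 := by
        conv_lhs => rw [hβ]
        rw [List.length_append]
        simp
      have hsle : β.dropLast.sum ≤ j := by
        rcases Nat.eq_zero_or_pos β.dropLast.length with hz | hpos
        · rw [List.length_eq_zero_iff] at hz
          rw [hz]; simp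
        · have hmem : β.dropLast.sum ∈ Dset β := by
            refine ⟨β.length - 1, by omega, by omega, ?_⟩
            rw [← List.dropLast_eq_take]
          have := hd hmem
          rw [Dset_hook] at this
          exact this.2
      refine ⟨⟨⟨β.dropLast.sum, by omega⟩,
        ⟨β.dropLast, fun hx => hc _ ((List.dropLast_sublist β).subset hx), rfl⟩⟩, ?_⟩
      simp only [hf]
      conv_rhs => rw [hβ]
      congr 1
      simp only [List.cons.injEq, and_true]
      omega
    · rintro ⟨⟨s, c⟩, rfl⟩
      have hs : (s:ℕ) ≤ j := by omega
      have hbs : c.blocks.sum = (s:ℕ) := c.blocks_sum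
      refine ⟨?_, ?_, ?_⟩
      · intro x hx
        simp only [hf, List.mem_append, List.mem_singleton] at hx
        rcases hx with hx | hx
        · exact c.blocks_pos hx
        · omega
      · simp only [hf, List.sum_append, List.sum_cons, List.sum_nil, hbs, hαsum]
        omega
      · rintro m ⟨i, h0, hilen, rfl⟩
        have hil : i ≤ c.blocks.length := by
          simp only [hf, List.length_append, List.length_singleton] at hilen
          omega
        have htake : ((f ⟨s, c⟩).take i) = c.blocks.take i := by
          simp only [hf]
          rw [List.take_append]
          have : i - c.blocks.length = 0 := by omega
          rw [this]
          simp
        rw [htake]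
        have hb := take_pos_sum (fun x hx => c.blocks_pos hx) hil
        rw [Dset_hook]
        refine ⟨by omega, by omega⟩
  have hinj : ∀ p₁ ∈ (Finset.univ : Finset (Σ s : Fin (j+1), Composition s.1)),
      ∀ p₂ ∈ Finset.univ, f p₁ = f p₂ → p₁ = p₂ := by
    rintro ⟨s₁, c₁⟩ - ⟨s₂, c₂⟩ - hfe
    simp only [hf] at hfe
    obtain ⟨hb, -⟩ := List.append_inj' hfe (by simp)
    have hs : s₁ = s₂ := by
      apply Fin.ext
      rw [← c₁.blocks_sum, ← c₂.blocks_sum, hb]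
    subst hs
    have : c₁ = c₂ := Composition.ext hb
    rw [this]
  have h1 : Ribbon α = ∑ᶠ β ∈ {β | IsComp β ∧ β.sum = α.sum ∧ Dset β ⊆ Dset α}, g β := rfl
  rw [h1, hset, finsum_mem_coe_finset, hT, Finset.sum_image hinj,
    ← Finset.univ_sigma_univ, Finset.sum_sigma,
    ← Fin.sum_univ_eq_sum_range (fun s => (-1:ℤ)^(j-s) • (Lam s * H ((n+j-s:ℕ):ℤ)))]
  apply Finset.sum_congr rfl
  intro a _
  have hs : (a:ℕ) ≤ j := by omega
  simp only [hf]
  rw [Lam, Finset.sum_mul, Finset.smul_sum]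
  apply Finset.sum_congr rfl
  intro c _
  simp only [hg]
  have hlenc : (c.blocks ++ [n + j - (a:ℕ)]).length = c.length + 1 := by
    rw [List.length_append]
    rfl
  have hlc : c.length ≤ (a:ℕ) := c.length_le
  rw [hlenc, hαlen]
  simp only [List.bind_eq_flatMap, List.flatMap_append, List.flatMap_cons, List.flatMap_nil,
    List.pure_def, List.map_append, List.prod_append, List.map_cons, List.map_nil,
    List.prod_cons, List.prod_nil, mul_one, List.append_nil]
  rw [smul_mul_assoc, smul_smul, ← pow_add]
  have he : j + 1 - (c.length + 1) = j - (a:ℕ) + ((a:ℕ) - c.length) := by omega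
  rw [he]

end RibbonFormula
/-- For `d ≥ 2` and `j ≥ 0`, `𝔹_0(R_{[1^j, d]}) = −R_{[1^{j+1}, d−1]}`. -/
theorem Bop_zero_ribbon (Mp : List ℕ → NSym →ₗ[ℚ] NSym) (hMp : MperpAxioms Mp)
    (d j : ℕ) (hd : 2 ≤ d) :
    Bop Mp 0 (Ribbon (List.replicate j 1 ++ [d]))
      = - Ribbon (List.replicate (j + 1) 1 ++ [d - 1]) := by
  classical
  rw [RibForm j d (by omega), RibForm (j+1) (d-1) (by omega)]
  set R : NSym := ∑ s ∈ Finset.range (j+1), (-1:ℤ)^(j-s) • (Lam s * H ((d+j-s:ℕ):ℤ)) with hR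
  -- action of Mp on R
  have hMpR : ∀ i : ℕ, Mp (List.replicate (i+1) 1) R
      = ∑ s ∈ Finset.range (j+1), (-1:ℤ)^(j-s) •
          (LamZ ((s:ℤ)-(i:ℤ)-1) * H ((d+j-s:ℕ):ℤ)
            + LamZ ((s:ℤ)-(i:ℤ)) * H (((d+j-s:ℕ):ℤ)-1)) := by
    intro i
    rw [hR, map_sum]
    apply Finset.sum_congr rfl
    intro s hs
    rw [Finset.mem_range] at hs
    rw [map_zsmul, Mp_Lam_H hMp s i (d+j-s) (by omega)]
  -- the Bop finsum has support inside range (j+2)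
  have hsupp : (Function.support fun i : ℕ =>
      (-1:ℤ)^i • (H ((0:ℤ) + (i:ℤ)) * Mp (List.replicate i 1) R))
      ⊆ ↑(Finset.range (j+2)) := by
    intro i hi
    rw [Function.mem_support] at hi
    by_contra hmem
    apply hi
    rw [Finset.coe_range, Set.mem_Iio, not_lt] at hmem
    obtain ⟨i', rfl⟩ : ∃ i', i = i' + 1 := ⟨i - 1, by omega⟩
    rw [hMpR i']
    have hz : ∀ s ∈ Finset.range (j+1), (-1:ℤ)^(j-s) •
        (LamZ ((s:ℤ)-(i':ℤ)-1) * H ((d+j-s:ℕ):ℤ)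
          + LamZ ((s:ℤ)-(i':ℤ)) * H (((d+j-s:ℕ):ℤ)-1)) = 0 := by
      intro s hs
      rw [Finset.mem_range] at hs
      rw [LamZ_neg (by push_cast; omega), LamZ_neg (by push_cast; omega)]
      simp
    rw [Finset.sum_congr rfl hz]
    simp
  rw [Bop, finsum_eq_sum_of_support_subset _ hsupp]
  rw [Finset.sum_range_succ' (fun i => (-1:ℤ)^i • (H ((0:ℤ) + (i:ℤ)) * Mp (List.replicate i 1) R)) (j+1)]
  -- the i = 0 term is R itself
  have h0 : (-1:ℤ)^(0:ℕ) • (H ((0:ℤ) + ((0:ℕ):ℤ)) * Mp (List.replicate 0 1) R) = R := by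
    rw [List.replicate_zero, Mp_nil hMp]
    norm_num [H_zero']
  rw [h0]
  -- rewrite the positive-index terms
  have hterm : ∀ i ∈ Finset.range (j+1),
      (-1:ℤ)^(i+1) • (H ((0:ℤ) + ((i+1:ℕ):ℤ)) * Mp (List.replicate (i+1) 1) R)
      = ∑ s ∈ Finset.range (j+1), (-1:ℤ)^(j-s) •
          ((-1:ℤ)^(i+1) • (H ((i+1:ℕ):ℤ) *
            (LamZ ((s:ℤ)-(i:ℤ)-1) * H ((d+j-s:ℕ):ℤ)
              + LamZ ((s:ℤ)-(i:ℤ)) * H (((d+j-s:ℕ):ℤ)-1)))) := by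
    intro i _
    rw [hMpR i, zero_add, Finset.mul_sum, Finset.smul_sum]
    apply Finset.sum_congr rfl
    intro s _
    rw [mul_smul_comm, smul_comm]
  rw [Finset.sum_congr rfl hterm, Finset.sum_comm, hR, ← Finset.sum_add_distrib]
  -- apply the key computation per s
  have hkey : ∀ s ∈ Finset.range (j+1),
      (∑ i ∈ Finset.range (j+1), (-1:ℤ)^(j-s) •
          ((-1:ℤ)^(i+1) • (H ((i+1:ℕ):ℤ) *
            (LamZ ((s:ℤ)-(i:ℤ)-1) * H ((d+j-s:ℕ):ℤ)
              + LamZ ((s:ℤ)-(i:ℤ)) * H (((d+j-s:ℕ):ℤ)-1)))))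
        + (-1:ℤ)^(j-s) • (Lam s * H ((d+j-s:ℕ):ℤ))
      = (-1:ℤ)^(j-s) • ((if s = 0 then H ((d+j-s:ℕ):ℤ) else 0)
          - Lam (s+1) * H (((d+j-s:ℕ):ℤ)-1)) := by
    intro s hs
    rw [Finset.mem_range] at hs
    rw [add_comm, ← Finset.smul_sum, ← smul_add,
      keyS s j (by omega) (H ((d+j-s:ℕ):ℤ)) (H (((d+j-s:ℕ):ℤ)-1))]
  rw [Finset.sum_congr rfl hkey]
  -- split the ite part from the rest
  have hsplit : ∀ s ∈ Finset.range (j+1),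
      (-1:ℤ)^(j-s) • ((if s = 0 then H ((d+j-s:ℕ):ℤ) else 0)
          - Lam (s+1) * H (((d+j-s:ℕ):ℤ)-1))
      = (-1:ℤ)^(j-s) • (if s = 0 then H ((d+j-s:ℕ):ℤ) else 0)
        - (-1:ℤ)^(j-s) • (Lam (s+1) * H (((d+j-s:ℕ):ℤ)-1)) := by
    intro s _
    rw [smul_sub]
  rw [Finset.sum_congr rfl hsplit, Finset.sum_sub_distrib]
  have hite : (∑ s ∈ Finset.range (j+1),
      (-1:ℤ)^(j-s) • (if s = 0 then H ((d+j-s:ℕ):ℤ) else 0))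
      = (-1:ℤ)^j • H ((d+j:ℕ):ℤ) := by
    rw [Finset.sum_eq_single_of_mem 0 (by simp)
      (fun s _ hs0 => by rw [if_neg hs0, smul_zero])]
    rw [if_pos rfl]
    norm_num
  rw [hite]
  -- now massage the RHS
  rw [Finset.sum_range_succ'
    (fun s => (-1:ℤ)^(j+1-s) • (Lam s * H ((d-1+(j+1)-s:ℕ):ℤ))) (j+1)]
  have hrhs : ∀ s ∈ Finset.range (j+1),
      (-1:ℤ)^(j+1-(s+1)) • (Lam (s+1) * H ((d-1+(j+1)-(s+1):ℕ):ℤ))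
      = (-1:ℤ)^(j-s) • (Lam (s+1) * H (((d+j-s:ℕ):ℤ)-1)) := by
    intro s hs
    rw [Finset.mem_range] at hs
    have e1 : j+1-(s+1) = j-s := by omega
    have e2 : ((d-1+(j+1)-(s+1):ℕ):ℤ) = ((d+j-s:ℕ):ℤ)-1 := by omega
    rw [e1, e2]
  rw [Finset.sum_congr rfl hrhs]
  have hlast : (-1:ℤ)^(j+1-0) • (Lam 0 * H ((d-1+(j+1)-0:ℕ):ℤ))
      = - ((-1:ℤ)^j • H ((d+j:ℕ):ℤ)) := by
    have e1 : j+1-0 = j+1 := rfl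
    have e2 : (d-1+(j+1)-0:ℕ) = d+j := by omega
    rw [e1, e2, Lam_zero, one_mul, pow_succ]
    simp
  rw [hlast]
  abel
end
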